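/- Let n ≥ 2 and s > n + 2. Let c₀, D, α_p be positive reals and γ > 1. Let φ₀, φ₁, T₀ ∈ L¹(ℝⁿ) with N_s(φ₀), N_{s−1}(φ₁), N_{s−1}(T₀) < ∞, where N_σ(g) := sup_{ξ∈ℝⁿ} (1+|ξ|²)^{σ/2} |ĝ(ξ)|. For each ξ ∈ ℝⁿ let t ↦ w(t,ξ) be the solution of the inviscid phase-space ODE ∂_t³w + γD|ξ|²∂_t²w + γc₀²|ξ|²∂_t w + γDc₀²|ξ|⁴ w = 0 with w(0,ξ) = φ̂₀(ξ), ∂_t w(0,ξ) = φ̂₁(ξ), ∂_t²w(0,ξ) = −γc₀²|ξ|²φ̂₀(ξ) + α_p c₀² γ D |ξ|² T̂₀(ξ). Then there exists C > 0 such that for all t > 0, ∫_{ℝⁿ} ( ∫₀^t |ξ|^{−2} |∂_t²w(τ,ξ)|² + |ξ|² |∂_t w(τ,ξ)|² dτ )^{1/2} dξ ≤ C ( N_s(φ₀) + N_{s−1}(φ₁) + N_{s−1}(T₀) ). -/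

import Mathlib

open MeasureTheory

/-- Fourier transform `f̂(ξ) = ∫ e^{−i x·ξ} f(x) dx` of a real-valued function on `ℝⁿ`. -/
noncomputable def ftR {n : ℕ} (f : EuclideanSpace ℝ (Fin n) → ℝ)
    (ξ : EuclideanSpace ℝ (Fin n)) : ℂ :=
  ∫ x, Complex.exp (-Complex.I * ((∑ i, x i * ξ i : ℝ) : ℂ)) * (f x : ℂ)

/-- The weighted Fourier sup-norm `N_σ(g) = sup_ξ (1+|ξ|²)^{σ/2} |ĝ(ξ)|` (in `[0,∞]`). -/
noncomputable def fourierSup {n : ℕ} (σ : ℝ) (g : EuclideanSpace ℝ (Fin n) → ℝ) : ENNReal :=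
  ⨆ ξ : EuclideanSpace ℝ (Fin n),
    ENNReal.ofReal ((1 + ‖ξ‖ ^ 2) ^ (σ / 2) * ‖ftR g ξ‖)

/-!
For fixed `ξ ≠ 0` put `ρ = |ξ|`; then `w(·, ξ)` solves `x''' + aρ²x'' + bρ²x' + cρ⁴x = 0` with
`a = γD`, `b = γc₀²`, `c = γDc₀²`, and `γ > 1` gives the Routh–Hurwitz condition `c < ab`.
For `c / b < θ < a` the quadratic form `thirdOrderEnergy` in `(x, x', x'')` is a Lyapunov
function: it is nonnegative and decreases at rate `2((a - θ)|x''|²/ρ² + (bθ - c)|x'|²)`. Hence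
`∫₀ᵗ |x''|²/ρ² + ρ²|x'|²` is bounded, uniformly in `t`, by a constant times `(1 + ρ²)` times
the initial energy, and the weighted bounds on the data turn its square root into
`C N (1+ρ²)^{(3-s)/2} / ρ`, with `N` the sum of the three Fourier norms. This weight is integrable over `ℝⁿ` precisely because
`n ≥ 2` (near `0`) and `s > n + 2` (near `∞`).
-/

open Set Metric Module
open scoped RealInnerProductSpace

section ThirdOrderEnergy

variable {E : Type*} [NormedAddCommGroup E] [InnerProductSpace ℝ E] {a b c θ ρ : ℝ}

variable (a b c θ ρ) in
noncomputable def thirdOrderEnergy (x y z : E) : ℝ :=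
  ⟪z, z⟫ / ρ ^ 4 + 2 * θ * ⟪y, z⟫ / ρ ^ 2 + (b / ρ ^ 2 + a * θ) * ⟪y, y⟫
    + 2 * c * ⟪x, y⟫ + c * θ * ρ ^ 2 * ⟪x, x⟫

theorem thirdOrderEnergy_nonneg (hθ : 0 < θ) (hθa : θ ≤ a) (hcθ : c ≤ b * θ) (hc : 0 ≤ c)
    (hρ : ρ ≠ 0) (x y z : E) : 0 ≤ thirdOrderEnergy a b c θ ρ x y z := by
  have hsos : θ * ρ ^ 4 * thirdOrderEnergy a b c θ ρ x y z
      = θ * ⟪z + (θ * ρ ^ 2) • y, z + (θ * ρ ^ 2) • y⟫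
        + c * ρ ^ 2 * ⟪(θ * ρ ^ 2) • x + y, (θ * ρ ^ 2) • x + y⟫
        + ((b * θ - c) * ρ ^ 2 + θ ^ 2 * (a - θ) * ρ ^ 4) * ⟪y, y⟫ := by
    simp only [thirdOrderEnergy, inner_add_left, inner_add_right, real_inner_smul_left,
      real_inner_smul_right, real_inner_comm x y, real_inner_comm y z]
    field_simp
    ring
  have hθa' : 0 ≤ a - θ := sub_nonneg.2 hθa
  have hcθ' : 0 ≤ b * θ - c := sub_nonneg.2 hcθ
  refine nonneg_of_mul_nonneg_right (a := θ * ρ ^ 4) ?_ (by positivity)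
  rw [hsos]
  have := real_inner_self_nonneg (x := y)
  have := real_inner_self_nonneg (x := z + (θ * ρ ^ 2) • y)
  have := real_inner_self_nonneg (x := (θ * ρ ^ 2) • x + y)
  positivity

theorem hasDerivAt_thirdOrderEnergy (hρ : ρ ≠ 0) {x y z : ℝ → E} {t : ℝ}
    (hx : HasDerivAt x (y t) t) (hy : HasDerivAt y (z t) t)
    (hz : HasDerivAt z (-((a * ρ ^ 2) • z t + (b * ρ ^ 2) • y t + (c * ρ ^ 4) • x t)) t) :
    HasDerivAt (fun τ => thirdOrderEnergy a b c θ ρ (x τ) (y τ) (z τ))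
      (-2 * ((a - θ) * ⟪z t, z t⟫ / ρ ^ 2 + (b * θ - c) * ⟪y t, y t⟫)) t := by
  have h := (((((hz.inner ℝ hz).div_const (ρ ^ 4)).add
    (((hy.inner ℝ hz).const_mul (2 * θ)).div_const (ρ ^ 2))).add
    ((hy.inner ℝ hy).const_mul (b / ρ ^ 2 + a * θ))).add
    ((hx.inner ℝ hy).const_mul (2 * c))).add ((hx.inner ℝ hx).const_mul (c * θ * ρ ^ 2))
  refine h.congr_deriv ?_
  simp only [inner_add_left, inner_add_right, inner_neg_left, inner_neg_right,
    real_inner_smul_left, real_inner_smul_right, real_inner_comm (x t) (y t),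
    real_inner_comm (y t) (z t), real_inner_comm (x t) (z t)]
  field_simp
  ring

theorem two_mul_integral_dissipation_le (hθ : 0 < θ) (hθa : θ ≤ a) (hcθ : c ≤ b * θ)
    (hc : 0 ≤ c) (hρ : ρ ≠ 0) {x y z : ℝ → E} {T : ℝ} (hT : 0 ≤ T)
    (hx : ∀ τ ∈ Icc 0 T, HasDerivAt x (y τ) τ) (hy : ∀ τ ∈ Icc 0 T, HasDerivAt y (z τ) τ)
    (hz : ∀ τ ∈ Icc 0 T,
      HasDerivAt z (-((a * ρ ^ 2) • z τ + (b * ρ ^ 2) • y τ + (c * ρ ^ 4) • x τ)) τ) :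
    2 * ∫ τ in 0..T, ((a - θ) * ⟪z τ, z τ⟫ / ρ ^ 2 + (b * θ - c) * ⟪y τ, y τ⟫)
      ≤ thirdOrderEnergy a b c θ ρ (x 0) (y 0) (z 0) := by
  rw [← uIcc_of_le hT] at hx hy hz
  have hyc : ContinuousOn y (uIcc 0 T) := fun τ hτ => (hy τ hτ).continuousAt.continuousWithinAt
  have hzc : ContinuousOn z (uIcc 0 T) := fun τ hτ => (hz τ hτ).continuousAt.continuousWithinAt
  have hftc := intervalIntegral.integral_eq_sub_of_hasDerivAt
    (fun τ hτ => hasDerivAt_thirdOrderEnergy (θ := θ) hρ (hx τ hτ) (hy τ hτ) (hz τ hτ))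
    (ContinuousOn.intervalIntegrable (by fun_prop))
  rw [intervalIntegral.integral_const_mul] at hftc
  have := thirdOrderEnergy_nonneg hθ hθa hcθ hc hρ (x T) (y T) (z T)
  linarith

theorem thirdOrderEnergy_le (ha : 0 ≤ a) (hb : 0 ≤ b) (hc : 0 ≤ c) (hθ : 0 ≤ θ) (hρ : 0 < ρ)
    (x y z : E) :
    thirdOrderEnergy a b c θ ρ x y z
      ≤ (1 + θ) * (1 + a + b + c)
        * (‖z‖ ^ 2 / ρ ^ 4 + (1 + ρ ^ 2) / ρ ^ 2 * ‖y‖ ^ 2 + ρ ^ 2 * ‖x‖ ^ 2) := by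
  -- after Cauchy–Schwarz, AM–GM in `P = ‖z‖/ρ²`, `Y = ‖y‖`, `Q = ‖y‖/ρ`, `R = ρ‖x‖`
  have hamgm : ∀ P Y Q R : ℝ,
      P ^ 2 + 2 * θ * (Y * P) + b * Q ^ 2 + a * θ * Y ^ 2 + 2 * c * (R * Q) + c * θ * R ^ 2
        ≤ (1 + θ) * (1 + a + b + c) * (P ^ 2 + Y ^ 2 + Q ^ 2 + R ^ 2) := by
    intro P Y Q R
    have hP : 0 ≤ (a + b + c + a * θ + b * θ + c * θ) * P ^ 2 := by positivity
    have hY : 0 ≤ (1 + a + b + c + b * θ + c * θ) * Y ^ 2 := by positivity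
    have hQ : 0 ≤ (1 + a + θ + a * θ + b * θ + c * θ) * Q ^ 2 := by positivity
    have hR : 0 ≤ (1 + a + b + θ + a * θ + b * θ) * R ^ 2 := by positivity
    nlinarith [mul_nonneg hθ (sq_nonneg (P - Y)), mul_nonneg hc (sq_nonneg (R - Q))]
  calc thirdOrderEnergy a b c θ ρ x y z
      ≤ ‖z‖ ^ 2 / ρ ^ 4 + 2 * θ * (‖y‖ * ‖z‖) / ρ ^ 2 + (b / ρ ^ 2 + a * θ) * ‖y‖ ^ 2
        + 2 * c * (‖x‖ * ‖y‖) + c * θ * ρ ^ 2 * ‖x‖ ^ 2 := by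
        simp only [thirdOrderEnergy, real_inner_self_eq_norm_sq]
        gcongr
        · exact real_inner_le_norm y z
        · exact real_inner_le_norm x y
    _ ≤ _ := by
        convert hamgm (‖z‖ / ρ ^ 2) ‖y‖ (‖y‖ / ρ) (ρ * ‖x‖) using 1 <;> field_simp <;> ring

theorem div_sq_add_sq_mul_le {κ p q A B : ℝ} (hκ : 0 < κ) (hp : κ ≤ p) (hq : κ ≤ q)
    (hA : 0 ≤ A) (hB : 0 ≤ B) (ρ : ℝ) :
    A / ρ ^ 2 + ρ ^ 2 * B ≤ (1 + ρ ^ 2) / κ * (p * A / ρ ^ 2 + q * B) := by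
  rw [div_mul_eq_mul_div, le_div_iff₀ hκ, mul_div_assoc]
  have hAρ : 0 ≤ A / ρ ^ 2 := by positivity
  have h1 := mul_le_mul_of_nonneg_right hp hAρ
  have h2 := mul_le_mul_of_nonneg_right hq hB
  have h3 := mul_nonneg (sq_nonneg ρ) (mul_nonneg (hκ.le.trans hp) hAρ)
  have h4 := mul_nonneg (sq_nonneg ρ) hB
  nlinarith

theorem integral_deriv_sq_le_thirdOrderEnergy (hθ : 0 < θ) (hθa : θ < a) (hcθ : c < b * θ)
    (hc : 0 ≤ c) (hρ : 0 < ρ) {W : ℝ → E} (hW : ContDiff ℝ 3 W)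
    (hode : ∀ τ, 0 ≤ τ → deriv (deriv (deriv W)) τ + (a * ρ ^ 2) • deriv (deriv W) τ
      + (b * ρ ^ 2) • deriv W τ + (c * ρ ^ 4) • W τ = 0) {T : ℝ} (hT : 0 ≤ T) :
    ∫ τ in 0..T, (‖deriv (deriv W) τ‖ ^ 2 / ρ ^ 2 + ρ ^ 2 * ‖deriv W τ‖ ^ 2)
      ≤ (1 + ρ ^ 2) / (2 * min (a - θ) (b * θ - c))
        * thirdOrderEnergy a b c θ ρ (W 0) (deriv W 0) (deriv (deriv W) 0) := by
  set κ := min (a - θ) (b * θ - c)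
  have hκ : 0 < κ := lt_min (by linarith) (by linarith)
  have hW1 : ContDiff ℝ 2 (deriv W) := hW.deriv'
  have hW2 : ContDiff ℝ 1 (deriv (deriv W)) := hW1.deriv'
  have hderiv : ∀ f : ℝ → E, ContDiff ℝ 1 f → ∀ τ, HasDerivAt f (deriv f τ) τ :=
    fun f hf τ => (hf.differentiable one_ne_zero τ).hasDerivAt
  have hdiss := two_mul_integral_dissipation_le hθ hθa.le hcθ.le hc hρ.ne' hT
    (fun τ _ => hderiv W (hW.of_le (by norm_num)) τ)
    (fun τ _ => hderiv _ (hW1.of_le (by norm_num)) τ)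
    (fun τ hτ => (hderiv _ hW2 τ).congr_deriv
      (eq_neg_of_add_eq_zero_left (by simpa only [add_assoc] using hode τ hτ.1)))
  simp only [real_inner_self_eq_norm_sq] at hdiss
  have := hW1.continuous
  have := hW2.continuous
  calc ∫ τ in 0..T, (‖deriv (deriv W) τ‖ ^ 2 / ρ ^ 2 + ρ ^ 2 * ‖deriv W τ‖ ^ 2)
      ≤ ∫ τ in 0..T, (1 + ρ ^ 2) / κ * ((a - θ) * ‖deriv (deriv W) τ‖ ^ 2 / ρ ^ 2
          + (b * θ - c) * ‖deriv W τ‖ ^ 2) :=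
        intervalIntegral.integral_mono_on hT (Continuous.intervalIntegrable (by fun_prop) _ _)
          (Continuous.intervalIntegrable (by fun_prop) _ _) fun τ _ =>
          div_sq_add_sq_mul_le hκ (min_le_left _ _) (min_le_right _ _) (by positivity)
            (by positivity) ρ
    _ = (1 + ρ ^ 2) / (2 * κ) * (2 * ∫ τ in 0..T, ((a - θ) * ‖deriv (deriv W) τ‖ ^ 2 / ρ ^ 2
          + (b * θ - c) * ‖deriv W τ‖ ^ 2)) := by
        rw [intervalIntegral.integral_const_mul]
        field_simp
    _ ≤ _ := mul_le_mul_of_nonneg_left hdiss (by positivity)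

end ThirdOrderEnergy

theorem rpow_div_two_sq {u : ℝ} (hu : 0 ≤ u) (r : ℝ) : (u ^ (r / 2)) ^ 2 = u ^ r := by
  rw [← Real.rpow_natCast, ← Real.rpow_mul hu]
  norm_num

theorem one_add_sq_mul_le_of_weighted_le {ρ s M N X Y Z : ℝ} (hρ : 0 < ρ) (hX0 : 0 ≤ X)
    (hY0 : 0 ≤ Y) (hZ0 : 0 ≤ Z) (hX : (1 + ρ ^ 2) ^ (s / 2) * X ≤ N)
    (hY : (1 + ρ ^ 2) ^ ((s - 1) / 2) * Y ≤ N)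
    (hZ : (1 + ρ ^ 2) ^ ((s - 1) / 2) * Z ≤ ρ ^ 2 * M * N) :
    (1 + ρ ^ 2) * (Z ^ 2 / ρ ^ 4 + (1 + ρ ^ 2) / ρ ^ 2 * Y ^ 2 + ρ ^ 2 * X ^ 2)
      ≤ (M ^ 2 + 2) * (N * ((1 + ρ ^ 2) ^ ((3 - s) / 2) / ρ)) ^ 2 := by
  set u := 1 + ρ ^ 2
  have hu : 0 < u := by positivity
  have hρu : ρ ^ 2 ≤ u := by simp [u]
  set p := u ^ ((s - 1) / 2)
  have hp : 0 < p := by positivity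
  have hXw : (u ^ (s / 2)) ^ 2 = p ^ 2 * u := by
    rw [rpow_div_two_sq hu.le, rpow_div_two_sq hu.le, ← Real.rpow_add_one hu.ne']
    ring_nf
  have hTw : (u ^ ((3 - s) / 2)) ^ 2 * p ^ 2 = u ^ 2 := by
    rw [rpow_div_two_sq hu.le, rpow_div_two_sq hu.le, ← Real.rpow_add hu, ← Real.rpow_natCast]
    ring_nf
  have hX2 : p ^ 2 * u * X ^ 2 ≤ N ^ 2 := by
    rw [← hXw, ← mul_pow]; exact pow_le_pow_left₀ (by positivity) hX 2
  have hY2 : p ^ 2 * Y ^ 2 ≤ N ^ 2 := by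
    rw [← mul_pow]; exact pow_le_pow_left₀ (by positivity) hY 2
  have hZ2 : p ^ 2 * Z ^ 2 ≤ ρ ^ 4 * (M ^ 2 * N ^ 2) := by
    rw [← mul_pow]; exact (pow_le_pow_left₀ (by positivity) hZ 2).trans_eq (by ring)
  have hu1 : u ≤ u ^ 2 / ρ ^ 2 := by
    rw [le_div_iff₀ (by positivity)]; nlinarith
  have hρ2 : ρ ^ 2 ≤ u ^ 2 / ρ ^ 2 := by
    rw [le_div_iff₀ (by positivity)]; nlinarith
  rw [← mul_le_mul_iff_of_pos_left (pow_pos hp 2)]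
  calc p ^ 2 * (u * (Z ^ 2 / ρ ^ 4 + u / ρ ^ 2 * Y ^ 2 + ρ ^ 2 * X ^ 2))
      = u * (p ^ 2 * Z ^ 2) / ρ ^ 4 + u ^ 2 / ρ ^ 2 * (p ^ 2 * Y ^ 2)
        + ρ ^ 2 * (p ^ 2 * u * X ^ 2) := by ring
    _ ≤ u * (ρ ^ 4 * (M ^ 2 * N ^ 2)) / ρ ^ 4 + u ^ 2 / ρ ^ 2 * N ^ 2 + ρ ^ 2 * N ^ 2 := by
        gcongr
    _ = M ^ 2 * N ^ 2 * u + N ^ 2 * (u ^ 2 / ρ ^ 2) + N ^ 2 * ρ ^ 2 := by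
        field_simp
    _ ≤ M ^ 2 * N ^ 2 * (u ^ 2 / ρ ^ 2) + N ^ 2 * (u ^ 2 / ρ ^ 2) + N ^ 2 * (u ^ 2 / ρ ^ 2) := by
        gcongr
    _ = p ^ 2 * ((M ^ 2 + 2) * (N * (u ^ ((3 - s) / 2) / ρ)) ^ 2) := by
        rw [← hTw]; ring

theorem rpow_mul_norm_neg_smul_add_smul_le {E : Type*} [NormedAddCommGroup E]
    [NormedSpace ℝ E] {b e ρ p q N : ℝ} (hb : 0 ≤ b) (he : 0 ≤ e) (hp : 0 ≤ p) (hpq : p ≤ q)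
    {x g : E} (hx : q * ‖x‖ ≤ N) (hg : p * ‖g‖ ≤ N) :
    p * ‖-((b * ρ ^ 2) • x) + (e * ρ ^ 2) • g‖ ≤ ρ ^ 2 * (b + e) * N := by
  have hpx : p * ‖x‖ ≤ N := (mul_le_mul_of_nonneg_right hpq (norm_nonneg _)).trans hx
  calc p * ‖-((b * ρ ^ 2) • x) + (e * ρ ^ 2) • g‖
      ≤ p * (b * ρ ^ 2 * ‖x‖ + e * ρ ^ 2 * ‖g‖) := by
        refine mul_le_mul_of_nonneg_left ((norm_add_le _ _).trans_eq ?_) hp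
        rw [norm_neg, norm_smul, norm_smul, Real.norm_of_nonneg (by positivity),
          Real.norm_of_nonneg (by positivity)]
    _ = ρ ^ 2 * (b * (p * ‖x‖) + e * (p * ‖g‖)) := by ring
    _ ≤ ρ ^ 2 * (b * N + e * N) := by gcongr
    _ = ρ ^ 2 * (b + e) * N := by ring

theorem integrable_one_add_norm_sq_rpow_div_norm {E : Type*} [NormedAddCommGroup E]
    [NormedSpace ℝ E] [FiniteDimensional ℝ E] [MeasurableSpace E] [BorelSpace E]
    {μ : Measure E} [μ.IsAddHaarMeasure] {s : ℝ} (hE : 1 < finrank ℝ E)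
    (hs : (finrank ℝ E : ℝ) + 2 < s) :
    Integrable (fun ξ : E => (1 + ‖ξ‖ ^ 2) ^ ((3 - s) / 2) / ‖ξ‖) μ := by
  have hmeas : AEStronglyMeasurable (fun ξ : E => (1 + ‖ξ‖ ^ 2) ^ ((3 - s) / 2) / ‖ξ‖) μ :=
    Measurable.aestronglyMeasurable (by fun_prop)
  have hE' : (1 : ℝ) < finrank ℝ E := by exact_mod_cast hE
  have hball : IntegrableOn (fun ξ : E => (1 + ‖ξ‖ ^ 2) ^ ((3 - s) / 2) / ‖ξ‖) (ball 0 1) μ := by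
    refine integrableOn_ball_of_norm_le_rpow (C := 1) (α := 1) hE.le hE'
      (ae_of_all _ fun ξ => ?_) hmeas
    rw [Real.norm_eq_abs, abs_of_nonneg (by positivity), Real.rpow_neg_one, one_mul, ← one_div]
    gcongr
    exact Real.rpow_le_one_of_one_le_of_nonpos (by nlinarith [sq_nonneg ‖ξ‖]) (by linarith)
  have hfar : IntegrableOn (fun ξ : E => (1 + ‖ξ‖ ^ 2) ^ ((3 - s) / 2) / ‖ξ‖) (ball 0 1)ᶜ μ := by
    refine (((integrable_rpow_neg_one_add_norm_sq (μ := μ) (r := s - 2) (by linarith)).const_mul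
      √2).integrableOn).mono' hmeas.restrict
      (ae_restrict_of_forall_mem measurableSet_ball.compl fun ξ hξ => ?_)
    have hξ1 : 1 ≤ ‖ξ‖ := by simpa using hξ
    have hu : 0 < 1 + ‖ξ‖ ^ 2 := by positivity
    rw [Real.norm_eq_abs, abs_of_nonneg (by positivity),
      show (3 - s) / 2 = -(s - 2) / 2 + 1 / 2 by ring, Real.rpow_add hu, ← Real.sqrt_eq_rpow,
      mul_div_assoc, mul_comm]
    gcongr
    rw [div_le_iff₀ (by positivity)]
    calc √(1 + ‖ξ‖ ^ 2) ≤ √(2 * ‖ξ‖ ^ 2) := Real.sqrt_le_sqrt (by nlinarith)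
      _ = √2 * ‖ξ‖ := by rw [Real.sqrt_mul zero_le_two, Real.sqrt_sq (norm_nonneg _)]
  simpa using hball.union hfar

theorem setLIntegral_Ioc_ofReal_rpow_half_le {g : ℝ → ℝ} {t B : ℝ} (hg : Continuous g)
    (hg0 : ∀ τ, 0 ≤ g τ) (ht : 0 ≤ t) (hB : 0 ≤ B) (h : ∫ τ in 0..t, g τ ≤ B ^ 2) :
    (∫⁻ τ in Ioc 0 t, ENNReal.ofReal (g τ)) ^ (1 / 2 : ℝ) ≤ ENNReal.ofReal B := by
  rw [← ofReal_integral_eq_lintegral_ofReal hg.integrableOn_Ioc (ae_of_all _ hg0),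
    ← intervalIntegral.integral_of_le ht]
  calc ENNReal.ofReal (∫ τ in 0..t, g τ) ^ (1 / 2 : ℝ) ≤ ENNReal.ofReal (B ^ 2) ^ (1 / 2 : ℝ) :=
        ENNReal.rpow_le_rpow (ENNReal.ofReal_le_ofReal h) (by norm_num)
    _ = ENNReal.ofReal B := by
        rw [ENNReal.ofReal_pow hB, ← ENNReal.rpow_natCast, ← ENNReal.rpow_mul]
        norm_num

noncomputable def dissipationConst (a b c θ e : ℝ) : ℝ :=
  √((1 + θ) * (1 + a + b + c) * ((b + e) ^ 2 + 2) / (2 * min (a - θ) (b * θ - c)))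

theorem rpow_half_lintegral_deriv_sq_le {E : Type*} [NormedAddCommGroup E]
    [InnerProductSpace ℝ E] {a b c θ e s ρ N : ℝ} (hθ : 0 < θ) (hθa : θ < a) (hcθ : c < b * θ)
    (hc : 0 ≤ c) (he : 0 ≤ e) (hρ : 0 ≤ ρ) {W : ℝ → E} (hW : ContDiff ℝ 3 W)
    (hode : ∀ τ, 0 ≤ τ → deriv (deriv (deriv W)) τ + (a * ρ ^ 2) • deriv (deriv W) τ
      + (b * ρ ^ 2) • deriv W τ + (c * ρ ^ 4) • W τ = 0)
    {g : E} (hW2 : deriv (deriv W) 0 = -((b * ρ ^ 2) • W 0) + (e * ρ ^ 2) • g)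
    (hX : (1 + ρ ^ 2) ^ (s / 2) * ‖W 0‖ ≤ N) (hY : (1 + ρ ^ 2) ^ ((s - 1) / 2) * ‖deriv W 0‖ ≤ N)
    (hg : (1 + ρ ^ 2) ^ ((s - 1) / 2) * ‖g‖ ≤ N) {T : ℝ} (hT : 0 ≤ T) :
    (∫⁻ τ in Ioc 0 T,
        ENNReal.ofReal (‖deriv (deriv W) τ‖ ^ 2 / ρ ^ 2 + ρ ^ 2 * ‖deriv W τ‖ ^ 2)) ^ (1 / 2 : ℝ)
      ≤ ENNReal.ofReal (dissipationConst a b c θ e * (N * ((1 + ρ ^ 2) ^ ((3 - s) / 2) / ρ))) := by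
  -- at `ρ = 0` both sides vanish, every term carrying a junk division by `0`
  rcases hρ.eq_or_lt with rfl | hρ
  · simp
  have ha : 0 < a := hθ.trans hθa
  have hb : 0 < b := pos_of_mul_pos_left (hc.trans_lt hcθ) hθ.le
  set κ := min (a - θ) (b * θ - c)
  have hκ : 0 < κ := lt_min (by linarith) (by linarith)
  have hN : 0 ≤ N := (by positivity : 0 ≤ (1 + ρ ^ 2) ^ ((s - 1) / 2) * ‖g‖).trans hg
  have hZ : (1 + ρ ^ 2) ^ ((s - 1) / 2) * ‖deriv (deriv W) 0‖ ≤ ρ ^ 2 * (b + e) * N := by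
    rw [hW2]
    exact rpow_mul_norm_neg_smul_add_smul_le hb.le he (by positivity)
      (Real.rpow_le_rpow_of_exponent_le (by nlinarith [sq_nonneg ρ]) (by linarith)) hX hg
  have hW1 : ContDiff ℝ 2 (deriv W) := hW.deriv'
  have hW2' : ContDiff ℝ 1 (deriv (deriv W)) := hW1.deriv'
  have := hW1.continuous
  have := hW2'.continuous
  refine setLIntegral_Ioc_ofReal_rpow_half_le (by fun_prop) (fun τ => by positivity) hT
    (mul_nonneg (Real.sqrt_nonneg _) (by positivity)) ?_
  calc ∫ τ in 0..T, (‖deriv (deriv W) τ‖ ^ 2 / ρ ^ 2 + ρ ^ 2 * ‖deriv W τ‖ ^ 2)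
      ≤ (1 + ρ ^ 2) / (2 * κ)
        * thirdOrderEnergy a b c θ ρ (W 0) (deriv W 0) (deriv (deriv W) 0) :=
        integral_deriv_sq_le_thirdOrderEnergy hθ hθa hcθ hc hρ hW hode hT
    _ ≤ (1 + ρ ^ 2) / (2 * κ) * ((1 + θ) * (1 + a + b + c)
        * (‖deriv (deriv W) 0‖ ^ 2 / ρ ^ 4 + (1 + ρ ^ 2) / ρ ^ 2 * ‖deriv W 0‖ ^ 2
          + ρ ^ 2 * ‖W 0‖ ^ 2)) := by
        gcongr
        exact thirdOrderEnergy_le (by linarith) hb.le hc hθ.le hρ _ _ _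
    _ = (1 + θ) * (1 + a + b + c) / (2 * κ) * ((1 + ρ ^ 2)
        * (‖deriv (deriv W) 0‖ ^ 2 / ρ ^ 4 + (1 + ρ ^ 2) / ρ ^ 2 * ‖deriv W 0‖ ^ 2
          + ρ ^ 2 * ‖W 0‖ ^ 2)) := by ring
    _ ≤ (1 + θ) * (1 + a + b + c) / (2 * κ)
        * (((b + e) ^ 2 + 2) * (N * ((1 + ρ ^ 2) ^ ((3 - s) / 2) / ρ)) ^ 2) := by
        refine mul_le_mul_of_nonneg_left ?_ (by positivity)
        exact one_add_sq_mul_le_of_weighted_le hρ (norm_nonneg _) (norm_nonneg _)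
          (norm_nonneg _) hX hY hZ
    _ = _ := by
        rw [dissipationConst, mul_pow _ (N * _), Real.sq_sqrt (by positivity)]
        ring

theorem rpow_mul_norm_ftR_le_toReal {n : ℕ} {σ : ℝ} {g : EuclideanSpace ℝ (Fin n) → ℝ}
    {A : ENNReal} (hA : A ≠ ⊤) (hgA : fourierSup σ g ≤ A) (ξ : EuclideanSpace ℝ (Fin n)) :
    (1 + ‖ξ‖ ^ 2) ^ (σ / 2) * ‖ftR g ξ‖ ≤ A.toReal :=
  (ENNReal.ofReal_le_iff_le_toReal hA).1
    ((le_iSup (fun ξ => ENNReal.ofReal ((1 + ‖ξ‖ ^ 2) ^ (σ / 2) * ‖ftR g ξ‖)) ξ).trans hgA)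

theorem stmt_19_general {n : ℕ} (hn : 2 ≤ n) (s : ℝ) (hs : (n : ℝ) + 2 < s)
    (c₀ D αp γ : ℝ) (hc₀ : 0 < c₀) (hD : 0 < D) (hαp : 0 < αp) (hγ : 1 < γ)
    (φ₀ φ₁ T₀ : EuclideanSpace ℝ (Fin n) → ℝ)
    (hφ₀N : fourierSup s φ₀ < ⊤) (hφ₁N : fourierSup (s - 1) φ₁ < ⊤)
    (hT₀N : fourierSup (s - 1) T₀ < ⊤)
    (w : ℝ → EuclideanSpace ℝ (Fin n) → ℂ)
    (hreg : ∀ ξ, ContDiff ℝ 3 (fun τ : ℝ => w τ ξ))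
    (hODE : ∀ ξ, ∀ t : ℝ, 0 ≤ t →
      deriv (deriv (deriv (fun τ => w τ ξ))) t
        + ((γ * D * ‖ξ‖ ^ 2 : ℝ) : ℂ) * deriv (deriv (fun τ => w τ ξ)) t
        + ((γ * c₀ ^ 2 * ‖ξ‖ ^ 2 : ℝ) : ℂ) * deriv (fun τ => w τ ξ) t
        + ((γ * D * c₀ ^ 2 * ‖ξ‖ ^ 4 : ℝ) : ℂ) * w t ξ = 0)
    (hinit0 : ∀ ξ, w 0 ξ = ftR φ₀ ξ)
    (hinit1 : ∀ ξ, deriv (fun τ => w τ ξ) 0 = ftR φ₁ ξ)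
    (hinit2 : ∀ ξ, deriv (deriv (fun τ => w τ ξ)) 0 =
      -((γ * c₀ ^ 2 * ‖ξ‖ ^ 2 : ℝ) : ℂ) * ftR φ₀ ξ
        + ((αp * c₀ ^ 2 * γ * D * ‖ξ‖ ^ 2 : ℝ) : ℂ) * ftR T₀ ξ) :
    ∃ C : ℝ, 0 < C ∧ ∀ t : ℝ, 0 < t →
      (∫⁻ ξ, (∫⁻ τ in Set.Ioc (0 : ℝ) t,
          ENNReal.ofReal (‖deriv (deriv (fun τ' => w τ' ξ)) τ‖ ^ 2 / ‖ξ‖ ^ 2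
            + ‖ξ‖ ^ 2 * ‖deriv (fun τ' => w τ' ξ) τ‖ ^ 2)) ^ ((1 : ℝ) / 2))
        ≤ ENNReal.ofReal C *
            (fourierSup s φ₀ + fourierSup (s - 1) φ₁ + fourierSup (s - 1) T₀) := by
  have hθ : 0 < D * (1 + γ) / 2 := by positivity
  have hθa : D * (1 + γ) / 2 < γ * D := by nlinarith
  have hcθ : γ * D * c₀ ^ 2 < γ * c₀ ^ 2 * (D * (1 + γ) / 2) := by
    nlinarith [mul_pos (mul_pos (mul_pos (by positivity : 0 < γ) hD) (pow_pos hc₀ 2)) (sub_pos.2 hγ)]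
  set C := dissipationConst (γ * D) (γ * c₀ ^ 2) (γ * D * c₀ ^ 2) (D * (1 + γ) / 2)
    (αp * c₀ ^ 2 * γ * D)
  have hC : 0 ≤ C := Real.sqrt_nonneg _
  set A := fourierSup s φ₀ + fourierSup (s - 1) φ₁ + fourierSup (s - 1) T₀
  have hA : A ≠ ⊤ := by simp [A, hφ₀N.ne, hφ₁N.ne, hT₀N.ne]
  have hw := integrable_one_add_norm_sq_rpow_div_norm (μ := volume)
    (E := EuclideanSpace ℝ (Fin n)) (s := s) (by simp; omega) (by simpa using hs)
  have hI : 0 ≤ ∫ ξ : EuclideanSpace ℝ (Fin n), (1 + ‖ξ‖ ^ 2) ^ ((3 - s) / 2) / ‖ξ‖ :=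
    integral_nonneg fun ξ => by positivity
  refine ⟨C * (∫ ξ, (1 + ‖ξ‖ ^ 2) ^ ((3 - s) / 2) / ‖ξ‖) + 1, by positivity, fun t ht => (lintegral_mono fun ξ =>
    rpow_half_lintegral_deriv_sq_le (e := αp * c₀ ^ 2 * γ * D) (N := A.toReal) hθ hθa hcθ
      (by positivity) (by positivity) (norm_nonneg ξ) (hreg ξ)
      (fun τ hτ => by simpa only [Complex.real_smul] using hODE ξ τ hτ)
      (by simp only [Complex.real_smul, hinit0, hinit2, neg_mul])
      (by simpa only [hinit0] using rpow_mul_norm_ftR_le_toReal hA (le_add_right le_self_add) ξ)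
      (by simpa only [hinit1] using rpow_mul_norm_ftR_le_toReal hA (le_add_right le_add_self) ξ)
      (rpow_mul_norm_ftR_le_toReal hA le_add_self ξ) ht.le).trans ?_⟩
  rw [← ofReal_integral_eq_lintegral_ofReal ((hw.const_mul _).const_mul C)
      (ae_of_all _ fun ξ => by positivity), integral_const_mul, integral_const_mul]
  conv_rhs => rw [← ENNReal.ofReal_toReal hA, ← ENNReal.ofReal_mul (by positivity)]
  exact ENNReal.ofReal_le_ofReal (by nlinarith [ENNReal.toReal_nonneg (a := A)])

/-- Proposition 5.4: for the inviscid phase-space solution `w`,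
`∫ ( ∫₀^t |ξ|^{−2}|∂_t²w|² + |ξ|²|∂_t w|² dτ )^{1/2} dξ
  ≤ C (N_s(φ₀) + N_{s−1}(φ₁) + N_{s−1}(T₀))` uniformly in `t > 0`. -/
theorem stmt_19 {n : ℕ} (hn : 2 ≤ n) (s : ℝ) (hs : (n : ℝ) + 2 < s)
    (c₀ D αp γ : ℝ) (hc₀ : 0 < c₀) (hD : 0 < D) (hαp : 0 < αp) (hγ : 1 < γ)
    (φ₀ φ₁ T₀ : EuclideanSpace ℝ (Fin n) → ℝ)
    (hφ₀1 : Integrable φ₀ volume) (hφ₁1 : Integrable φ₁ volume) (hT₀1 : Integrable T₀ volume)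
    (hφ₀N : fourierSup s φ₀ < ⊤) (hφ₁N : fourierSup (s - 1) φ₁ < ⊤)
    (hT₀N : fourierSup (s - 1) T₀ < ⊤)
    (w : ℝ → EuclideanSpace ℝ (Fin n) → ℂ)
    (hreg : ∀ ξ, ContDiff ℝ 3 (fun τ : ℝ => w τ ξ))
    (hODE : ∀ ξ, ∀ t : ℝ, 0 ≤ t →
      deriv (deriv (deriv (fun τ => w τ ξ))) t
        + ((γ * D * ‖ξ‖ ^ 2 : ℝ) : ℂ) * deriv (deriv (fun τ => w τ ξ)) t
        + ((γ * c₀ ^ 2 * ‖ξ‖ ^ 2 : ℝ) : ℂ) * deriv (fun τ => w τ ξ) t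
        + ((γ * D * c₀ ^ 2 * ‖ξ‖ ^ 4 : ℝ) : ℂ) * w t ξ = 0)
    (hinit0 : ∀ ξ, w 0 ξ = ftR φ₀ ξ)
    (hinit1 : ∀ ξ, deriv (fun τ => w τ ξ) 0 = ftR φ₁ ξ)
    (hinit2 : ∀ ξ, deriv (deriv (fun τ => w τ ξ)) 0 =
      -((γ * c₀ ^ 2 * ‖ξ‖ ^ 2 : ℝ) : ℂ) * ftR φ₀ ξ
        + ((αp * c₀ ^ 2 * γ * D * ‖ξ‖ ^ 2 : ℝ) : ℂ) * ftR T₀ ξ) :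
    ∃ C : ℝ, 0 < C ∧ ∀ t : ℝ, 0 < t →
      (∫⁻ ξ, (∫⁻ τ in Set.Ioc (0 : ℝ) t,
          ENNReal.ofReal (‖deriv (deriv (fun τ' => w τ' ξ)) τ‖ ^ 2 / ‖ξ‖ ^ 2
            + ‖ξ‖ ^ 2 * ‖deriv (fun τ' => w τ' ξ) τ‖ ^ 2)) ^ ((1 : ℝ) / 2))
        ≤ ENNReal.ofReal C *
            (fourierSup s φ₀ + fourierSup (s - 1) φ₁ + fourierSup (s - 1) T₀) :=
  stmt_19_general hn s hs c₀ D αp γ hc₀ hD hαp hγ φ₀ φ₁ T₀ hφ₀N hφ₁N hT₀N w hreg hODE hinit0 hinit1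
    hinit2
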